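/- For a nonzero generalized Euclidean distance matrix D, one has 1'D†1 ≥ 0. -/

import Mathlib

open Matrix

/-!
If `D v = 1` and `wᵀ D = 1`, then `1ᵀ D† 1 = wᵀ D D† D v = wᵀ D v = 1ᵀ v`, and `Dᵀ` is the GEDM
with `a` and `b` swapped, so it suffices to solve `D v = 1` with `1ᵀ v ≥ 0`. Write `d = diag L`;
on vectors `x ⊥ 1` the GEDM acts as `D x = b² (dᵀx) 1 - 2ab L x`. If some `k ∈ ker L` with `k ⊥ 1`
has `dᵀk ≠ 0`, a multiple of `k` solves `D v = 1` with `1ᵀ v = 0`. Otherwise the centred diagonal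
`d - (tr L / n) 1` is orthogonal to `ker L`, hence equals `L z` for some `z ⊥ 1`, and
`D (a z + (2b/n) 1) = b (ab zᵀLz + 2(a² + b²) tr L / n) 1`, whose coefficient is positive because
`L` is positive semidefinite and nonzero.
-/

/-- `Dp` is the Moore-Penrose inverse of `D`. -/
def IsMoorePenrose {n : ℕ} (D Dp : Matrix (Fin n) (Fin n) ℝ) : Prop :=
  D * Dp * D = D ∧ Dp * D * Dp = Dp ∧ (D * Dp)ᵀ = D * Dp ∧ (Dp * D)ᵀ = Dp * D

theorem Matrix.dotProduct_mulVec_eq_of_mul_mul_eq {m n R : Type*} [Fintype m] [Fintype n]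
    [CommSemiring R] {D : Matrix m n R} {G : Matrix n m R} (hG : D * G * D = D)
    {v y : n → R} {w x : m → R} (hv : D *ᵥ v = x) (hw : w ᵥ* D = y) :
    y ⬝ᵥ (G *ᵥ x) = y ⬝ᵥ v := by
  rw [← hv, ← hw, ← dotProduct_mulVec, ← dotProduct_mulVec, mulVec_mulVec, mulVec_mulVec, hG]

theorem Matrix.IsHermitian.exists_mulVec_eq {ι : Type*} [Fintype ι] {L : Matrix ι ι ℝ}
    (hL : L.IsHermitian) {x : ι → ℝ} (hx : ∀ k, L *ᵥ k = 0 → x ⬝ᵥ k = 0) :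
    ∃ z, L *ᵥ z = x := by
  classical
  have hT := isSymmetric_toEuclideanLin_iff.mpr hL
  have hmem : WithLp.toLp 2 x ∈ LinearMap.range (toEuclideanLin L) := by
    rw [← Submodule.orthogonal_orthogonal (LinearMap.range _), hT.orthogonal_range]
    intro k hk
    have := hx k.ofLp (by simpa using congrArg WithLp.ofLp (LinearMap.mem_ker.mp hk))
    simpa [EuclideanSpace.inner_eq_star_dotProduct, dotProduct_comm] using this
  obtain ⟨z, hz⟩ := hmem
  exact ⟨z.ofLp, by simpa using congrArg WithLp.ofLp hz⟩

variable {ι : Type*}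

section MeanCenter

variable [Fintype ι]

noncomputable def meanCenter (x : ι → ℝ) : ι → ℝ :=
  x - ((Fintype.card ι : ℝ)⁻¹ * ∑ i, x i) • 1

theorem sum_meanCenter [Nonempty ι] (x : ι → ℝ) : ∑ i, meanCenter x i = 0 := by
  simp [meanCenter, Finset.sum_sub_distrib]

theorem mulVec_meanCenter {L : Matrix ι ι ℝ} (hL1 : L *ᵥ 1 = 0) (x : ι → ℝ) :
    L *ᵥ meanCenter x = L *ᵥ x := by
  simp [meanCenter, mulVec_sub, mulVec_smul, hL1]

theorem meanCenter_dotProduct (x y : ι → ℝ) : meanCenter x ⬝ᵥ y = x ⬝ᵥ meanCenter y := by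
  simp only [meanCenter, sub_dotProduct, dotProduct_sub, smul_dotProduct, dotProduct_smul,
    one_dotProduct, dotProduct_one, smul_eq_mul]
  ring

end MeanCenter

-- The paper's `a²L̃J + b²JL̃ - 2abL`, with `L̃ = diagonal (diag L)` and `J` the all-ones matrix.
def gedm (a b : ℝ) (L : Matrix ι ι ℝ) : Matrix ι ι ℝ :=
  a ^ 2 • vecMulVec (diag L) 1 + b ^ 2 • vecMulVec 1 (diag L) - (2 * a * b) • L

theorem gedm_transpose (a b : ℝ) {L : Matrix ι ι ℝ} (hL : L.IsSymm) :
    (gedm a b L)ᵀ = gedm b a L := by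
  simp only [gedm, transpose_add, transpose_sub, transpose_smul, transpose_vecMulVec, hL.eq,
    add_comm (a ^ 2 • _), mul_right_comm 2 a b]

section GEDM

variable [Fintype ι] {L : Matrix ι ι ℝ} {a b : ℝ}

theorem gedm_mulVec (x : ι → ℝ) :
    gedm a b L *ᵥ x =
      (a ^ 2 * ∑ i, x i) • diag L + (b ^ 2 * (diag L ⬝ᵥ x)) • 1 - (2 * a * b) • (L *ᵥ x) := by
  simp only [gedm, add_mulVec, sub_mulVec, smul_mulVec, vecMulVec_mulVec, one_dotProduct,
    op_smul_eq_smul, smul_smul]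

theorem gedm_mulVec_of_sum_eq_zero {x : ι → ℝ} (hx : ∑ i, x i = 0) :
    gedm a b L *ᵥ x = (b ^ 2 * (diag L ⬝ᵥ x)) • 1 - (2 * a * b) • (L *ᵥ x) := by
  simp [gedm_mulVec, hx]

theorem exists_ker_or_mulVec_eq_meanCenter_diag [Nonempty ι] (hL : L.IsHermitian)
    (hL1 : L *ᵥ 1 = 0) :
    (∃ k, L *ᵥ k = 0 ∧ ∑ i, k i = 0 ∧ diag L ⬝ᵥ k ≠ 0) ∨
      ∃ z, L *ᵥ z = meanCenter (diag L) ∧ ∑ i, z i = 0 := by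
  refine or_iff_not_imp_left.mpr fun h => ?_
  push Not at h
  obtain ⟨z, hz⟩ := hL.exists_mulVec_eq (x := meanCenter (diag L)) fun k hk => by
    rw [meanCenter_dotProduct]
    exact h _ (by rw [mulVec_meanCenter hL1, hk]) (sum_meanCenter k)
  exact ⟨meanCenter z, by rw [mulVec_meanCenter hL1, hz], sum_meanCenter z⟩

theorem exists_gedm_mulVec_eq_one_of_mem_ker (hb : b ≠ 0) {k : ι → ℝ} (hk : L *ᵥ k = 0)
    (hk1 : ∑ i, k i = 0) (hdk : diag L ⬝ᵥ k ≠ 0) :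
    ∃ v, gedm a b L *ᵥ v = 1 ∧ ∑ i, v i = 0 := by
  refine ⟨(b ^ 2 * (diag L ⬝ᵥ k))⁻¹ • k, ?_, ?_⟩
  · rw [mulVec_smul, gedm_mulVec_of_sum_eq_zero hk1, hk, smul_zero, sub_zero, smul_smul,
      inv_mul_cancel₀ (by positivity), one_smul]
  · simp [← Finset.mul_sum, hk1]

theorem gedm_mulVec_of_mulVec_eq_meanCenter_diag [Nonempty ι] (hL1 : L *ᵥ 1 = 0) {z : ι → ℝ}
    (hz : L *ᵥ z = meanCenter (diag L)) (hz1 : ∑ i, z i = 0) :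
    gedm a b L *ᵥ (a • z + (2 * b / Fintype.card ι) • 1) =
      (b * (a * b * (z ⬝ᵥ L *ᵥ z) + 2 * (a ^ 2 + b ^ 2) * L.trace / Fintype.card ι)) • 1 := by
  have hzLz : z ⬝ᵥ L *ᵥ z = diag L ⬝ᵥ z := by
    rw [hz, meanCenter, dotProduct_sub, dotProduct_smul, dotProduct_one, hz1, smul_zero,
      sub_zero, dotProduct_comm]
  rw [mulVec_add, mulVec_smul, mulVec_smul, gedm_mulVec_of_sum_eq_zero hz1, gedm_mulVec, hzLz,
    hz, hL1]
  ext i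
  simp only [meanCenter, trace, diag_apply, dotProduct_one, Pi.one_apply, Finset.sum_const,
    Finset.card_univ, nsmul_eq_mul, mul_one, smul_zero, sub_zero, smul_add, Pi.add_apply,
    Pi.smul_apply, Pi.sub_apply, smul_eq_mul]
  field_simp
  ring

theorem exists_gedm_mulVec_eq_one (hL : L.PosSemidef) (hL1 : L *ᵥ 1 = 0) (hL0 : L ≠ 0)
    (ha : 0 < a) (hb : 0 < b) : ∃ v, gedm a b L *ᵥ v = 1 ∧ 0 ≤ ∑ i, v i := by
  have : Nonempty ι := by
    by_contra h
    exact hL0 (Matrix.ext fun i => (not_nonempty_iff.mp h).elim i)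
  rcases exists_ker_or_mulVec_eq_meanCenter_diag hL.isHermitian hL1 with
    ⟨k, hk, hk1, hdk⟩ | ⟨z, hz, hz1⟩
  · obtain ⟨v, hv, hv1⟩ := exists_gedm_mulVec_eq_one_of_mem_ker (a := a) hb.ne' hk hk1 hdk
    exact ⟨v, hv, hv1.ge⟩
  · have hzLz : 0 ≤ z ⬝ᵥ L *ᵥ z := by simpa using hL.dotProduct_mulVec_nonneg z
    have htr : 0 < L.trace :=
      hL.trace_nonneg.lt_of_ne (Ne.symm (hL.trace_eq_zero_iff.not.mpr hL0))
    set s := b * (a * b * (z ⬝ᵥ L *ᵥ z) + 2 * (a ^ 2 + b ^ 2) * L.trace / Fintype.card ι)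
    have hs : 0 < s := by positivity
    refine ⟨s⁻¹ • (a • z + (2 * b / Fintype.card ι) • 1), ?_, ?_⟩
    · rw [mulVec_smul, gedm_mulVec_of_mulVec_eq_meanCenter_diag hL1 hz hz1, smul_smul,
        inv_mul_cancel₀ hs.ne', one_smul]
    · simp only [Pi.smul_apply, Pi.add_apply, smul_eq_mul, Pi.one_apply, mul_one, ← Finset.mul_sum,
        Finset.sum_add_distrib, hz1, mul_zero, Finset.sum_const, Finset.card_univ, nsmul_eq_mul,
        zero_add]
      positivity

end GEDM

/-- For a nonzero GEDM `D`, `1ᵀ D† 1 ≥ 0`. -/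
theorem stmt13 (n : ℕ) (L D : Matrix (Fin n) (Fin n) ℝ) (hL : L.PosSemidef)
    (hL1 : L *ᵥ (fun _ => (1 : ℝ)) = 0) (hL0 : L ≠ 0)
    (a b : ℝ) (ha : 0 < a) (hb : 0 < b)
    (hD : ∀ i j, D i j = a ^ 2 * L i i + b ^ 2 * L j j - 2 * a * b * L i j)
    (Dp : Matrix (Fin n) (Fin n) ℝ) (hDp : IsMoorePenrose D Dp) :
    0 ≤ (fun _ => (1 : ℝ)) ⬝ᵥ (Dp *ᵥ fun _ => (1 : ℝ)) := by
  have hDeq : D = gedm a b L := by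
    ext i j
    simp [hD, gedm, vecMulVec]
  obtain ⟨v, hv, hv0⟩ := exists_gedm_mulVec_eq_one hL hL1 hL0 ha hb
  obtain ⟨w, hw, -⟩ := exists_gedm_mulVec_eq_one hL hL1 hL0 hb ha
  rw [← hDeq] at hv
  rw [← gedm_transpose a b (isHermitian_iff_isSymm.mp hL.isHermitian), ← hDeq,
    mulVec_transpose] at hw
  calc 0 ≤ ∑ i, v i := hv0
    _ = 1 ⬝ᵥ (Dp *ᵥ 1) := by rw [dotProduct_mulVec_eq_of_mul_mul_eq hDp.1 hv hw, one_dotProduct]
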